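/- arXiv:1706.10107 — 2 statements merged into one kernel-verified Lean document; each statement's English description precedes it below -/
import Mathlib

section
/- Let X and Y be Banach spaces and let F : X → Y be Fréchet differentiable. Fix ā ∈ X, let A† : X → Y and A : Y → X be bounded linear operators with A injective, and let r > 0 and Y₀, Z₀, Z₁, Z₂ ≥ 0 be constants satisfying: (i) ‖A F(ā)‖_X ≤ Y₀; (ii) ‖Id_X − A∘A†‖ ≤ Z₀; (iii) ‖A∘(A† − DF(ā))‖ ≤ Z₁; (iv) ‖A∘(DF(x) − DF(ā))‖ ≤ Z₂ ‖x − ā‖_X for all x in the closed ball of radius r centered at ā; and (v) Y₀ + (Z₀ + Z₁) r + Z₂ r² < r. Then there exists a unique ã in the open ball of radius r centered at ā such that F(ã) = 0. -/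
/-!
The Newton-like operator `T x = x - A (F x)` has derivative `id - A ∘ DF x`, which splits as
`(id - A A†) + A (A† - DF ā) - A (DF x - DF ā)`; on the closed ball of radius `r` its norm is
therefore at most `κ = Z₀ + Z₁ + Z₂ r`. The radii-polynomial inequality reads `Y₀ + κ r < r`, so by
the mean value theorem `T` is a `κ`-contraction mapping the closed ball into the open ball, and
Banach's fixed point theorem applies. Fixed points of `T` are exactly the zeros of `F` because `A`
is injective.
-/

open Metric Function Set
open scoped NNReal

section FixedPoint

variable {α : Type*} [MetricSpace α] {T : α → α} {c : α} {r : ℝ} {K : ℝ≥0}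

theorem LipschitzOnWith.mapsTo_closedBall_ball (hT : LipschitzOnWith K T (closedBall c r))
    (hc : dist (T c) c + K * r < r) : MapsTo T (closedBall c r) (ball c r) := by
  intro x hx
  have hcr : c ∈ closedBall c r := mem_closedBall_self (dist_nonneg.trans hx)
  calc dist (T x) c ≤ dist (T x) (T c) + dist (T c) c := dist_triangle _ _ _
    _ ≤ K * r + dist (T c) c := by
        gcongr
        exact (hT.dist_le_mul x hx c hcr).trans (by gcongr; exact hx)
    _ < r := by linarith

theorem LipschitzOnWith.existsUnique_isFixedPt_ball [CompleteSpace α]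
    (hT : LipschitzOnWith K T (closedBall c r)) (hr : 0 ≤ r) (hc : dist (T c) c + K * r < r) :
    ∃! x, x ∈ ball c r ∧ IsFixedPt T x := by
  have hmaps := hT.mapsTo_closedBall_ball hc
  have hmaps' : MapsTo T (closedBall c r) (closedBall c r) :=
    fun x hx => ball_subset_closedBall (hmaps hx)
  have hK : K < 1 := by
    have hKr : (K : ℝ) * r < 1 * r := by linarith [dist_nonneg (x := T c) (y := c)]
    exact_mod_cast lt_of_mul_lt_mul_right hKr hr
  have hcontr : ContractingWith K (hmaps'.restrict T _ _) := ⟨hK, hT.mapsToRestrict hmaps'⟩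
  obtain ⟨x, hx, hfix, -⟩ := hcontr.exists_fixedPoint' isClosed_closedBall.isComplete hmaps'
    (mem_closedBall_self hr) (edist_ne_top _ _)
  refine ⟨x, ⟨hfix ▸ hmaps hx, hfix⟩, fun y ⟨hy, hyfix⟩ => ?_⟩
  have hrestrict : IsFixedPt (hmaps'.restrict T _ _) ⟨y, ball_subset_closedBall hy⟩ :=
    Subtype.ext hyfix
  have hxrestrict : IsFixedPt (hmaps'.restrict T _ _) ⟨x, hx⟩ := Subtype.ext hfix
  exact congrArg Subtype.val (hcontr.fixedPoint_unique' hrestrict hxrestrict)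

end FixedPoint

section Operators

variable {𝕜 X Y : Type*} [NontriviallyNormedField 𝕜] [SeminormedAddCommGroup X]
  [NormedSpace 𝕜 X] [SeminormedAddCommGroup Y] [NormedSpace 𝕜 Y]

theorem ContinuousLinearMap.norm_id_sub_comp_le (A : Y →L[𝕜] X) (B D₀ D : X →L[𝕜] Y) :
    ‖ContinuousLinearMap.id 𝕜 X - A.comp D‖ ≤
      ‖ContinuousLinearMap.id 𝕜 X - A.comp B‖ + ‖A.comp (B - D₀)‖ + ‖A.comp (D - D₀)‖ := by
  have hsplit : ContinuousLinearMap.id 𝕜 X - A.comp D =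
      (ContinuousLinearMap.id 𝕜 X - A.comp B) + A.comp (B - D₀) - A.comp (D - D₀) := by
    rw [comp_sub, comp_sub]
    abel
  rw [hsplit]
  exact (norm_sub_le _ _).trans (by gcongr; exact norm_add_le _ _)

end Operators

theorem isFixedPt_sub_iff {X Y G : Type*} [AddCommGroup X] [AddCommGroup Y] [FunLike G Y X]
    [AddMonoidHomClass G Y X] {F : X → Y} {A : G} (hA : Injective A) {x : X} :
    IsFixedPt (fun x => x - A (F x)) x ↔ F x = 0 := by
  rw [IsFixedPt, sub_eq_self, map_eq_zero_iff A hA]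

theorem exists_unique_zero_of_radii_polynomial_general
    {X Y : Type*} [NormedAddCommGroup X] [NormedSpace ℝ X] [CompleteSpace X]
    [NormedAddCommGroup Y] [NormedSpace ℝ Y] [CompleteSpace Y]
    (F : X → Y) (DF : X → X →L[ℝ] Y) (hF : ∀ x, HasFDerivAt F (DF x) x)
    (abar : X) (Adag : X →L[ℝ] Y) (A : Y →L[ℝ] X)
    (hA : Function.Injective A)
    (r Y₀ Z₀ Z₁ Z₂ : ℝ) (hr : 0 < r)
    (hZ₀ : 0 ≤ Z₀) (hZ₁ : 0 ≤ Z₁) (hZ₂ : 0 ≤ Z₂)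
    (hY : ‖A (F abar)‖ ≤ Y₀)
    (hZ0 : ‖ContinuousLinearMap.id ℝ X - A.comp Adag‖ ≤ Z₀)
    (hZ1 : ‖A.comp (Adag - DF abar)‖ ≤ Z₁)
    (hZ2 : ∀ x ∈ Metric.closedBall abar r, ‖A.comp (DF x - DF abar)‖ ≤ Z₂ * ‖x - abar‖)
    (hp : Y₀ + (Z₀ + Z₁) * r + Z₂ * r ^ 2 < r) :
    ∃! atilde : X, atilde ∈ Metric.ball abar r ∧ F atilde = 0 := by
  set T : X → X := fun x => x - A (F x)
  have hT : ∀ x, HasFDerivAt T (ContinuousLinearMap.id ℝ X - A.comp (DF x)) x :=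
    fun x => (hasFDerivAt_id x).sub (A.hasFDerivAt.comp x (hF x))
  set K : ℝ≥0 := ⟨Z₀ + Z₁ + Z₂ * r, by positivity⟩
  have hDT : ∀ x ∈ closedBall abar r, ‖ContinuousLinearMap.id ℝ X - A.comp (DF x)‖₊ ≤ K := by
    intro x hx
    have hxr : ‖x - abar‖ ≤ r := by rwa [← dist_eq_norm]
    refine (A.norm_id_sub_comp_le Adag (DF abar) (DF x)).trans ?_
    grw [hZ0, hZ1, hZ2 x hx, hxr]
  have hlip : LipschitzOnWith K T (closedBall abar r) :=
    (convex_closedBall abar r).lipschitzOnWith_of_nnnorm_hasFDerivWithin_le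
      (fun x _ => (hT x).hasFDerivWithinAt) hDT
  have hc : dist (T abar) abar + K * r < r := by
    have hKr : (K : ℝ) = Z₀ + Z₁ + Z₂ * r := rfl
    rw [hKr, dist_eq_norm, sub_sub_cancel_left, norm_neg]
    linarith
  simpa only [T, isFixedPt_sub_iff hA] using hlip.existsUnique_isFixedPt_ball hr.le hc

/-- Newton–Kantorovich-type a-posteriori theorem (radii polynomial approach).
Under the bounds `Y₀, Z₀, Z₁, Z₂` and the radii-polynomial condition
`Y₀ + (Z₀ + Z₁) r + Z₂ r² < r`, there is a unique zero of `F` in the open ball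
of radius `r` about `ā`. -/
theorem exists_unique_zero_of_radii_polynomial
    {X Y : Type*} [NormedAddCommGroup X] [NormedSpace ℝ X] [CompleteSpace X]
    [NormedAddCommGroup Y] [NormedSpace ℝ Y] [CompleteSpace Y]
    (F : X → Y) (DF : X → X →L[ℝ] Y) (hF : ∀ x, HasFDerivAt F (DF x) x)
    (abar : X) (Adag : X →L[ℝ] Y) (A : Y →L[ℝ] X)
    (hA : Function.Injective A)
    (r Y₀ Z₀ Z₁ Z₂ : ℝ) (hr : 0 < r)
    (hY₀ : 0 ≤ Y₀) (hZ₀ : 0 ≤ Z₀) (hZ₁ : 0 ≤ Z₁) (hZ₂ : 0 ≤ Z₂)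
    (hY : ‖A (F abar)‖ ≤ Y₀)
    (hZ0 : ‖ContinuousLinearMap.id ℝ X - A.comp Adag‖ ≤ Z₀)
    (hZ1 : ‖A.comp (Adag - DF abar)‖ ≤ Z₁)
    (hZ2 : ∀ x ∈ Metric.closedBall abar r, ‖A.comp (DF x - DF abar)‖ ≤ Z₂ * ‖x - abar‖)
    (hp : Y₀ + (Z₀ + Z₁) * r + Z₂ * r ^ 2 < r) :
    ∃! atilde : X, atilde ∈ Metric.ball abar r ∧ F atilde = 0 :=
  exists_unique_zero_of_radii_polynomial_general F DF hF abar Adag A hA r Y₀ Z₀ Z₁ Z₂ hr hZ₀ hZ₁ hZ₂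
    hY hZ0 hZ1 hZ2 hp
end

section
/- Let f : ℝⁿ → ℝⁿ be continuously differentiable, U ⊆ ℝⁿ open, and Φ : U × [0,∞) → ℝⁿ a map such that for every x ∈ U, Φ(x,0) = x and the curve t ↦ Φ(x,t) is differentiable with ∂Φ/∂t(x,t) = f(Φ(x,t)) for all t ≥ 0. Let 1 ≤ d ≤ n, let λ₁, …, λ_d < 0 be real numbers, let B denote the open unit ball in ℝ^d, and define L : ℝ^d × ℝ → ℝ^d by L(s,t) = (e^{λ₁ t} s₁, …, e^{λ_d t} s_d). Suppose P : B → ℝⁿ is continuously differentiable with P(B) ⊆ U and P satisfies the invariance equation f(P(s)) = Σ_{j=1}^d λ_j s_j ∂P/∂s_j(s) for all s ∈ B. Then Φ(P(s), t) = P(L(s,t)) for all s ∈ B and all t ≥ 0. -/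
/-! Both `t ↦ Φ(P(s), t)` and `t ↦ P(L(s, t))` solve `y' = f(y)` with initial value `P(s)`:
the first by assumption, the second by the chain rule, since `∂L/∂t = (λ_j L_j)_j` and the
invariance equation turns `DP(L) (λ_j L_j)_j` into `f(P(L))`; the curve `L(s, ·)` stays in `B`
because the `λ_j` are negative. A `C¹` vector field is locally Lipschitz, hence Lipschitz on the
compact set swept out by the two curves over `[0, T]`, so the solutions coincide there. -/

open Set

theorem LocallyLipschitz.eqOn_Ici_of_hasDerivAt {E : Type*} [NormedAddCommGroup E]
    [NormedSpace ℝ E] {f : E → E} (hf : LocallyLipschitz f) {γ₁ γ₂ : ℝ → E} {a : ℝ}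
    (hγ₁ : ∀ t ∈ Ici a, HasDerivAt γ₁ (f (γ₁ t)) t)
    (hγ₂ : ∀ t ∈ Ici a, HasDerivAt γ₂ (f (γ₂ t)) t)
    (ha : γ₁ a = γ₂ a) :
    EqOn γ₁ γ₂ (Ici a) := by
  intro T hT
  have hIco : Ico a T ⊆ Icc a T := Ico_subset_Icc_self
  have hIcc : Icc a T ⊆ Ici a := Icc_subset_Ici_self
  have hγ₁c : ContinuousOn γ₁ (Icc a T) :=
    fun t ht => (hγ₁ t (hIcc ht)).continuousAt.continuousWithinAt
  have hγ₂c : ContinuousOn γ₂ (Icc a T) :=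
    fun t ht => (hγ₂ t (hIcc ht)).continuousAt.continuousWithinAt
  set K := γ₁ '' Icc a T ∪ γ₂ '' Icc a T
  have hK : IsCompact K :=
    (isCompact_Icc.image_of_continuousOn hγ₁c).union (isCompact_Icc.image_of_continuousOn hγ₂c)
  obtain ⟨C, hC⟩ := (hf.locallyLipschitzOn (s := K)).exists_lipschitzOnWith_of_compact hK
  exact ODE_solution_unique_of_mem_Icc_right (v := fun _ => f) (s := fun _ => K) (fun _ _ => hC)
    hγ₁c (fun t ht => (hγ₁ t (hIcc (hIco ht))).hasDerivWithinAt)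
    (fun t ht => Or.inl ⟨t, hIco ht, rfl⟩)
    hγ₂c (fun t ht => (hγ₂ t (hIcc (hIco ht))).hasDerivWithinAt)
    (fun t ht => Or.inr ⟨t, hIco ht, rfl⟩) ha ⟨hT, le_rfl⟩

section DiagonalFlow

variable {ι : Type*} (lam : ι → ℝ)

/-- The paper's `L(s, t)`: the flow of the diagonal linear system `s_j' = λ_j s_j`. -/
noncomputable def diagFlow (t : ℝ) (s : ι → ℝ) : ι → ℝ := fun j => Real.exp (lam j * t) * s j

variable {lam}

@[simp]
theorem diagFlow_zero (s : ι → ℝ) : diagFlow lam 0 s = s := by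
  ext j
  simp [diagFlow]

theorem hasDerivAt_diagFlow (s : ι → ℝ) (t : ℝ) :
    HasDerivAt (diagFlow lam · s) (fun j => lam j * diagFlow lam t s j) t := by
  refine hasDerivAt_pi.2 fun j => ?_
  have hexp : HasDerivAt (fun u => Real.exp (lam j * u)) (Real.exp (lam j * t) * lam j) t := by
    simpa using ((hasDerivAt_id t).const_mul (lam j)).exp
  simpa only [diagFlow, mul_comm (lam j), mul_right_comm] using hexp.mul_const (s j)

theorem norm_diagFlow_le [Fintype ι] (hlam : ∀ j, lam j ≤ 0) (s : ι → ℝ) {t : ℝ}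
    (ht : 0 ≤ t) : ‖diagFlow lam t s‖ ≤ ‖s‖ := by
  refine (pi_norm_le_iff_of_nonneg (norm_nonneg s)).2 fun j => ?_
  have hexp : Real.exp (lam j * t) ≤ 1 :=
    Real.exp_le_one_iff.2 (mul_nonpos_of_nonpos_of_nonneg (hlam j) ht)
  calc ‖diagFlow lam t s j‖ = Real.exp (lam j * t) * ‖s j‖ := by
        rw [diagFlow, norm_mul, Real.norm_of_nonneg (Real.exp_pos _).le]
    _ ≤ ‖s j‖ := mul_le_of_le_one_left (norm_nonneg _) hexp
    _ ≤ ‖s‖ := norm_le_pi_norm s j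

theorem hasDerivAt_comp_diagFlow [Fintype ι] {F : Type*} [NormedAddCommGroup F]
    [NormedSpace ℝ F] {P : (ι → ℝ) → F} {f : F → F} {s : ι → ℝ} {t : ℝ}
    (hP : DifferentiableAt ℝ P (diagFlow lam t s))
    (hinv : f (P (diagFlow lam t s)) =
      fderiv ℝ P (diagFlow lam t s) (fun j => lam j * diagFlow lam t s j)) :
    HasDerivAt (fun τ => P (diagFlow lam τ s)) (f (P (diagFlow lam t s))) t :=
  hinv ▸ hP.hasFDerivAt.comp_hasDerivAt t (hasDerivAt_diagFlow s t)

end DiagonalFlow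

theorem invariance_implies_flow_conjugacy_general
    {n d : ℕ}
    (f : (Fin n → ℝ) → Fin n → ℝ) (hf : ContDiff ℝ 1 f)
    (U : Set (Fin n → ℝ))
    (Φ : (Fin n → ℝ) → ℝ → Fin n → ℝ)
    (hΦ0 : ∀ x ∈ U, Φ x 0 = x)
    (hΦ : ∀ x ∈ U, ∀ t : ℝ, 0 ≤ t → HasDerivAt (Φ x) (f (Φ x t)) t)
    (lam : Fin d → ℝ) (hlam : ∀ j, lam j < 0)
    (P : (Fin d → ℝ) → Fin n → ℝ)
    (hP : ContDiffOn ℝ 1 P (Metric.ball (0 : Fin d → ℝ) 1))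
    (hPU : ∀ s ∈ Metric.ball (0 : Fin d → ℝ) 1, P s ∈ U)
    (hinv : ∀ s ∈ Metric.ball (0 : Fin d → ℝ) 1,
      f (P s) = fderiv ℝ P s (fun j => lam j * s j)) :
    ∀ s ∈ Metric.ball (0 : Fin d → ℝ) 1, ∀ t : ℝ, 0 ≤ t →
      Φ (P s) t = P (fun j => Real.exp (lam j * t) * s j) := by
  intro s hs t ht
  have hflow_mem : ∀ τ ∈ Ici (0 : ℝ), diagFlow lam τ s ∈ Metric.ball (0 : Fin d → ℝ) 1 :=
    fun τ hτ => mem_ball_zero_iff.2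
      ((norm_diagFlow_le (fun j => (hlam j).le) s hτ).trans_lt (mem_ball_zero_iff.1 hs))
  have hPdiff : ∀ τ ∈ Ici (0 : ℝ), DifferentiableAt ℝ P (diagFlow lam τ s) := fun τ hτ =>
    (hP.differentiableOn one_ne_zero).differentiableAt
      (Metric.isOpen_ball.mem_nhds (hflow_mem τ hτ))
  exact hf.locallyLipschitz.eqOn_Ici_of_hasDerivAt (γ₂ := fun τ => P (diagFlow lam τ s))
    (fun τ hτ => hΦ _ (hPU s hs) τ hτ)
    (fun τ hτ => hasDerivAt_comp_diagFlow (hPdiff τ hτ) (hinv _ (hflow_mem τ hτ)))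
    (by simp [hΦ0 _ (hPU s hs)]) ht

/-- Parameterization Lemma, one direction: if `P` solves the invariance
equation `f(P(s)) = Σ_j λ_j s_j ∂P/∂s_j(s)` on the open unit ball `B ⊂ ℝ^d`, subject to
the stated regularity hypotheses, then `P` satisfies the flow conjugacy
`Φ(P(s), t) = P(L(s,t))` for all `s ∈ B` and `t ≥ 0`, where
`L(s,t) = (e^{λ₁ t} s₁, …, e^{λ_d t} s_d)`. -/
theorem invariance_implies_flow_conjugacy
    {n d : ℕ} (hd : 1 ≤ d) (hdn : d ≤ n)
    (f : (Fin n → ℝ) → Fin n → ℝ) (hf : ContDiff ℝ 1 f)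
    (U : Set (Fin n → ℝ)) (hU : IsOpen U)
    (Φ : (Fin n → ℝ) → ℝ → Fin n → ℝ)
    (hΦ0 : ∀ x ∈ U, Φ x 0 = x)
    (hΦ : ∀ x ∈ U, ∀ t : ℝ, 0 ≤ t → HasDerivAt (Φ x) (f (Φ x t)) t)
    (lam : Fin d → ℝ) (hlam : ∀ j, lam j < 0)
    (P : (Fin d → ℝ) → Fin n → ℝ)
    (hP : ContDiffOn ℝ 1 P (Metric.ball (0 : Fin d → ℝ) 1))
    (hPU : ∀ s ∈ Metric.ball (0 : Fin d → ℝ) 1, P s ∈ U)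
    (hinv : ∀ s ∈ Metric.ball (0 : Fin d → ℝ) 1,
      f (P s) = fderiv ℝ P s (fun j => lam j * s j)) :
    ∀ s ∈ Metric.ball (0 : Fin d → ℝ) 1, ∀ t : ℝ, 0 ≤ t →
      Φ (P s) t = P (fun j => Real.exp (lam j * t) * s j) :=
  invariance_implies_flow_conjugacy_general f hf U Φ hΦ0 hΦ lam hlam P hP hPU hinv
end
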